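/- Let f, f_θ : ℝ^n → ℝ^n with f L-Lipschitz, and let q solve q'' = f(q) on [t0, t1] while the discrete sequence is defined by v_{k+1} = v_k + f_θ(q_k)·Δt, q_{k+1} = q_k + v_{k+1}·Δt with q_0 = q(t0), v_0 = q'(t0) and Δt = (t1−t0)/τ. If sup_x ‖f_θ(x) − f(x)‖ ≤ δ and ‖q'''‖, ‖f‖ are bounded by M on the relevant region, then ‖q_τ − q(t1)‖ ≤ C·(Δt + δ) for a constant C depending only on L, M, and t1 − t0. -/

import Mathlib

open Set

/-- Mean value inequality on an interval, `HasDerivAt` version. -/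
lemma mvt_bound' {E : Type*} [NormedAddCommGroup E] [NormedSpace ℝ E]
    {g g' : ℝ → E} {a b K : ℝ} (hab : a ≤ b)
    (hg : ∀ x ∈ Icc a b, HasDerivAt g (g' x) x)
    (hK : ∀ x ∈ Icc a b, ‖g' x‖ ≤ K) : ‖g b - g a‖ ≤ K * (b - a) :=
  norm_image_sub_le_of_norm_deriv_le_segment'
    (fun x hx => (hg x hx).hasDerivWithinAt)
    (fun x hx => hK x (Ico_subset_Icc_self hx)) b (right_mem_Icc.2 hab)

set_option maxHeartbeats 4000000 in
/-- Global error bound for the symplectic Euler scheme with an approximate force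
field `fθ`: the position error at the final time is `≤ C·(Δt + δ)`, where `C`
depends only on the Lipschitz constant `L`, the bound `M`, and the horizon `t1 - t0`. -/
theorem stmt_8 (n : ℕ) (L : NNReal) (M : ℝ) (t0 t1 : ℝ) (ht : t0 < t1) :
    ∃ C : ℝ,
      ∀ (f fθ : EuclideanSpace ℝ (Fin n) → EuclideanSpace ℝ (Fin n)),
        LipschitzWith L f →
      ∀ (q q' q''' : ℝ → EuclideanSpace ℝ (Fin n)),
        (∀ t ∈ Set.Icc t0 t1, HasDerivAt q (q' t) t) →
        (∀ t ∈ Set.Icc t0 t1, HasDerivAt q' (f (q t)) t) →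
        (∀ t ∈ Set.Icc t0 t1, HasDerivAt (fun s => f (q s)) (q''' t) t) →
        (∀ t ∈ Set.Icc t0 t1, ‖q''' t‖ ≤ M) →
        (∀ x, ‖f x‖ ≤ M) →
      ∀ (δ : ℝ), (∀ x, ‖fθ x - f x‖ ≤ δ) →
      ∀ (τ : ℕ), 1 ≤ τ →
      ∀ (qd vd : ℕ → EuclideanSpace ℝ (Fin n)),
        qd 0 = q t0 → vd 0 = q' t0 →
        (∀ k, vd (k + 1) = vd k + ((t1 - t0) / τ) • fθ (qd k)) →
        (∀ k, qd (k + 1) = qd k + ((t1 - t0) / τ) • vd (k + 1)) →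
        ‖qd τ - q t1‖ ≤ C * ((t1 - t0) / τ + δ) := by
  refine ⟨(1 + (t1 - t0) + 3*M + M*(t1 - t0)) / (1 + (L:ℝ)*(1 + (t1 - t0))) *
      Real.exp ((1 + (L:ℝ)*(1 + (t1 - t0))) * (t1 - t0)), ?_⟩
  intro f fθ hLip q q' q''' hq hq' hq3 hM3 hfM δ hδ τ hτ qd vd hq0 hv0 hvd hqd
  obtain ⟨A, hAdef⟩ : ∃ A : ℝ, A = 1 + (L:ℝ)*(1 + (t1 - t0)) := ⟨_, rfl⟩
  obtain ⟨B, hBdef⟩ : ∃ B : ℝ, B = 1 + (t1 - t0) + 3*M + M*(t1 - t0) := ⟨_, rfl⟩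
  obtain ⟨h, hhdef⟩ : ∃ h : ℝ, h = (t1 - t0) / τ := ⟨_, rfl⟩
  rw [← hhdef] at hvd hqd
  rw [show (1 + (t1 - t0) + 3*M + M*(t1 - t0)) / (1 + (L:ℝ)*(1 + (t1 - t0))) *
      Real.exp ((1 + (L:ℝ)*(1 + (t1 - t0))) * (t1 - t0)) * ((t1 - t0) / τ + δ)
      = B / A * Real.exp (A * (t1 - t0)) * (h + δ) by rw [hAdef, hBdef, hhdef]]
  have hT : (0:ℝ) < t1 - t0 := sub_pos.2 ht
  have hτ0 : (0:ℝ) < (τ:ℝ) := by exact_mod_cast hτ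
  have hτ1 : (1:ℝ) ≤ (τ:ℝ) := by exact_mod_cast hτ
  have hh : 0 < h := hhdef ▸ div_pos hT hτ0
  have hhT : h ≤ t1 - t0 := hhdef ▸ div_le_self hT.le hτ1
  have hM0 : 0 ≤ M := (norm_nonneg _).trans (hfM 0)
  have hδ0 : 0 ≤ δ := (norm_nonneg _).trans (hδ 0)
  have hL0 : (0:ℝ) ≤ (L:ℝ) := L.coe_nonneg
  have hA1 : (1:ℝ) ≤ A := by rw [hAdef]; nlinarith
  have hA0 : (0:ℝ) < A := lt_of_lt_of_le one_pos hA1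
  have hB0 : (0:ℝ) ≤ B := by rw [hBdef]; nlinarith
  -- grid points
  set tt : ℕ → ℝ := fun k => t0 + k * h with httdef
  have httm : ∀ k : ℕ, k ≤ τ → tt k ∈ Icc t0 t1 := by
    intro k hk
    have hk' : (k:ℝ) ≤ (τ:ℝ) := by exact_mod_cast hk
    have h1 : (k:ℝ) * h ≤ (τ:ℝ) * h := mul_le_mul_of_nonneg_right hk' hh.le
    have h2 : (τ:ℝ) * h = t1 - t0 := by
      rw [hhdef]; field_simp
    constructor
    · simp only [httdef]; nlinarith [mul_nonneg (Nat.cast_nonneg k : (0:ℝ) ≤ k) hh.le]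
    · simp only [httdef]; nlinarith
  have httτ : tt τ = t1 := by
    have h2 : (τ:ℝ) * h = t1 - t0 := by rw [hhdef]; field_simp
    simp only [httdef]; linarith
  have hstep : ∀ k : ℕ, tt (k+1) = tt k + h := by
    intro k; simp only [httdef]; push_cast; ring
  -- one-step continuous estimates
  have E1 : ∀ a b : ℝ, a ∈ Icc t0 t1 → b ∈ Icc t0 t1 → a ≤ b →
      ‖q' b - q' a‖ ≤ M * (b - a) := by
    intro a b ha hb hab
    have hsub : Icc a b ⊆ Icc t0 t1 := Icc_subset_Icc ha.1 hb.2
    exact mvt_bound' hab (fun x hx => hq' x (hsub hx)) (fun x hx => hfM _)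
  have E2 : ∀ a b : ℝ, a ∈ Icc t0 t1 → b ∈ Icc t0 t1 → a ≤ b →
      ‖f (q b) - f (q a)‖ ≤ M * (b - a) := by
    intro a b ha hb hab
    have hsub : Icc a b ⊆ Icc t0 t1 := Icc_subset_Icc ha.1 hb.2
    exact mvt_bound' hab (fun x hx => hq3 x (hsub hx)) (fun x hx => hM3 x (hsub hx))
  have E3 : ∀ a b : ℝ, a ∈ Icc t0 t1 → b ∈ Icc t0 t1 → a ≤ b →
      ‖q' b - q' a - (b - a) • f (q a)‖ ≤ M * (b - a) * (b - a) := by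
    intro a b ha hb hab
    have hsub : Icc a b ⊆ Icc t0 t1 := Icc_subset_Icc ha.1 hb.2
    have key := mvt_bound' (g := fun s => q' s - (s - a) • f (q a))
        (g' := fun s => f (q s) - f (q a)) (K := M * (b - a)) hab
        (fun s hs => by
          have d : HasDerivAt (fun s : ℝ => (s - a) • f (q a)) ((1:ℝ) • f (q a)) s :=
            ((hasDerivAt_id s).sub_const a).smul_const (f (q a))
          rw [one_smul] at d
          exact (hq' s (hsub hs)).sub d)
        (fun s hs => by
          have h1 : ‖f (q s) - f (q a)‖ ≤ M * (s - a) := E2 a s ha (hsub hs) hs.1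
          have h2 : M * (s - a) ≤ M * (b - a) :=
            mul_le_mul_of_nonneg_left (by linarith [hs.2]) hM0
          linarith)
    simp only [sub_self, zero_smul, sub_zero] at key
    calc ‖q' b - q' a - (b - a) • f (q a)‖
        = ‖q' b - (b - a) • f (q a) - q' a‖ := by rw [sub_right_comm]
      _ ≤ M * (b - a) * (b - a) := key
  have E4 : ∀ a b : ℝ, a ∈ Icc t0 t1 → b ∈ Icc t0 t1 → a ≤ b →
      ‖q b - q a - (b - a) • q' a‖ ≤ M * (b - a) * (b - a) := by
    intro a b ha hb hab
    have hsub : Icc a b ⊆ Icc t0 t1 := Icc_subset_Icc ha.1 hb.2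
    have key := mvt_bound' (g := fun s => q s - (s - a) • q' a)
        (g' := fun s => q' s - q' a) (K := M * (b - a)) hab
        (fun s hs => by
          have d : HasDerivAt (fun s : ℝ => (s - a) • q' a) ((1:ℝ) • q' a) s :=
            ((hasDerivAt_id s).sub_const a).smul_const (q' a)
          rw [one_smul] at d
          exact (hq s (hsub hs)).sub d)
        (fun s hs => by
          have h1 : ‖q' s - q' a‖ ≤ M * (s - a) := E1 a s ha (hsub hs) hs.1
          have h2 : M * (s - a) ≤ M * (b - a) :=
            mul_le_mul_of_nonneg_left (by linarith [hs.2]) hM0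
          linarith)
    simp only [sub_self, zero_smul, sub_zero] at key
    calc ‖q b - q a - (b - a) • q' a‖
        = ‖q b - (b - a) • q' a - q a‖ := by rw [sub_right_comm]
      _ ≤ M * (b - a) * (b - a) := key
  -- main induction
  have key : ∀ k : ℕ, k ≤ τ →
      ‖qd k - q (tt k)‖ + ‖vd k - q' (tt k)‖
        ≤ B / A * ((1 + h * A) ^ k - 1) * (h + δ) := by
    intro k
    induction k with
    | zero =>
      intro _
      have : tt 0 = t0 := by simp [httdef]
      simp [this, hq0, hv0]
    | succ k ih =>
      intro hk1
      have hk : k ≤ τ := Nat.le_of_succ_le hk1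
      have IH := ih hk
      set a := tt k with hadef
      set b := tt (k+1) with hbdef
      have hba : b = a + h := hstep k
      have hab : a ≤ b := by rw [hba]; linarith
      have ha : a ∈ Icc t0 t1 := httm k hk
      have hb : b ∈ Icc t0 t1 := httm (k+1) hk1
      have hbah : b - a = h := by rw [hba]; ring
      obtain ⟨ek, hekdef⟩ : ∃ e : ℝ, e = ‖qd k - q a‖ := ⟨_, rfl⟩
      obtain ⟨vk, hvkdef⟩ : ∃ v : ℝ, v = ‖vd k - q' a‖ := ⟨_, rfl⟩
      rw [← hekdef, ← hvkdef] at IH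
      have hek0 : 0 ≤ ek := hekdef ▸ norm_nonneg _
      have hvk0 : 0 ≤ vk := hvkdef ▸ norm_nonneg _
      have hLqd : ‖f (qd k) - f (q a)‖ ≤ (L:ℝ) * ek := by
        have := hLip.dist_le_mul (qd k) (q a)
        rw [dist_eq_norm, dist_eq_norm, ← hekdef] at this
        exact this
      -- velocity error step
      have hv1 : ‖vd (k+1) - q' b‖ ≤ vk + h * δ + h * ((L:ℝ) * ek) + M * h * h := by
        have hdecomp : vd (k+1) - q' b =
            (vd k - q' a) + h • (fθ (qd k) - f (qd k)) + h • (f (qd k) - f (q a))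
              - (q' b - q' a - h • f (q a)) := by
          rw [hvd k]
          simp only [smul_sub]
          abel
        have hE3 := E3 a b ha hb hab
        rw [hbah] at hE3
        calc ‖vd (k+1) - q' b‖
            = ‖(vd k - q' a) + h • (fθ (qd k) - f (qd k)) + h • (f (qd k) - f (q a))
                - (q' b - q' a - h • f (q a))‖ := by rw [hdecomp]
          _ ≤ ‖(vd k - q' a) + h • (fθ (qd k) - f (qd k)) + h • (f (qd k) - f (q a))‖
                + ‖q' b - q' a - h • f (q a)‖ := norm_sub_le _ _
          _ ≤ ‖(vd k - q' a) + h • (fθ (qd k) - f (qd k))‖ + ‖h • (f (qd k) - f (q a))‖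
                + ‖q' b - q' a - h • f (q a)‖ := by
                gcongr; exact norm_add_le _ _
          _ ≤ ‖vd k - q' a‖ + ‖h • (fθ (qd k) - f (qd k))‖ + ‖h • (f (qd k) - f (q a))‖
                + ‖q' b - q' a - h • f (q a)‖ := by
                gcongr; exact norm_add_le _ _
          _ ≤ vk + h * δ + h * ((L:ℝ) * ek) + M * h * h := by
                have n1 : ‖h • (fθ (qd k) - f (qd k))‖ ≤ h * δ := by
                  rw [norm_smul, Real.norm_eq_abs, abs_of_pos hh]
                  exact mul_le_mul_of_nonneg_left (hδ (qd k)) hh.le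
                have n2 : ‖h • (f (qd k) - f (q a))‖ ≤ h * ((L:ℝ) * ek) := by
                  rw [norm_smul, Real.norm_eq_abs, abs_of_pos hh]
                  exact mul_le_mul_of_nonneg_left hLqd hh.le
                linarith [hE3, hvkdef.le, hvkdef.ge]
      -- position error step
      have hq1 : ‖qd (k+1) - q b‖ ≤ ek + h * ‖vd (k+1) - q' b‖ + 2 * (M * h * h) := by
        have hdecomp : qd (k+1) - q b =
            (qd k - q a) + h • (vd (k+1) - q' b) + h • (q' b - q' a)
              - (q b - q a - h • q' a) := by
          rw [hqd k]
          simp only [smul_sub]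
          abel
        have hE4 := E4 a b ha hb hab
        have hE1 := E1 a b ha hb hab
        rw [hbah] at hE4 hE1
        calc ‖qd (k+1) - q b‖
            = ‖(qd k - q a) + h • (vd (k+1) - q' b) + h • (q' b - q' a)
                - (q b - q a - h • q' a)‖ := by rw [hdecomp]
          _ ≤ ‖(qd k - q a) + h • (vd (k+1) - q' b) + h • (q' b - q' a)‖
                + ‖q b - q a - h • q' a‖ := norm_sub_le _ _
          _ ≤ ‖(qd k - q a) + h • (vd (k+1) - q' b)‖ + ‖h • (q' b - q' a)‖
                + ‖q b - q a - h • q' a‖ := by gcongr; exact norm_add_le _ _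
          _ ≤ ‖qd k - q a‖ + ‖h • (vd (k+1) - q' b)‖ + ‖h • (q' b - q' a)‖
                + ‖q b - q a - h • q' a‖ := by gcongr; exact norm_add_le _ _
          _ ≤ ek + h * ‖vd (k+1) - q' b‖ + (h * (M * h) + M * h * h) := by
                have n1 : ‖h • (vd (k+1) - q' b)‖ = h * ‖vd (k+1) - q' b‖ := by
                  rw [norm_smul, Real.norm_eq_abs, abs_of_pos hh]
                have n2 : ‖h • (q' b - q' a)‖ ≤ h * (M * h) := by
                  rw [norm_smul, Real.norm_eq_abs, abs_of_pos hh]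
                  exact mul_le_mul_of_nonneg_left hE1 hh.le
                linarith [hE4, hekdef.le, hekdef.ge]
          _ = ek + h * ‖vd (k+1) - q' b‖ + 2 * (M * h * h) := by ring
      -- combine
      have step1 : ‖qd (k+1) - q b‖ + ‖vd (k+1) - q' b‖
          ≤ (1 + h * A) * (ek + vk) + h * B * (h + δ) := by
        have hV0 : 0 ≤ ‖vd (k+1) - q' b‖ := norm_nonneg _
        have hv1' := mul_le_mul_of_nonneg_left hv1 hh.le
        rw [hAdef, hBdef]
        nlinarith [hq1, hv1, hv1',
          mul_nonneg hek0 hh.le,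
          mul_nonneg (mul_nonneg (mul_nonneg hek0 hh.le) hL0) (sub_nonneg.2 hhT),
          mul_nonneg (mul_nonneg (mul_nonneg hvk0 hh.le) hL0) (by linarith : (0:ℝ) ≤ 1 + (t1 - t0)),
          mul_nonneg (mul_nonneg hδ0 hh.le) (sub_nonneg.2 hhT),
          mul_nonneg (mul_nonneg (mul_nonneg hδ0 hh.le) hM0) (by linarith : (0:ℝ) ≤ 3 + (t1 - t0)),
          mul_nonneg (mul_nonneg hh.le hh.le) (by linarith : (0:ℝ) ≤ 1 + (t1 - t0)),
          mul_nonneg (mul_nonneg (mul_nonneg hM0 hh.le) hh.le) (sub_nonneg.2 hhT)]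
      have hP0 : (0:ℝ) < 1 + h * A := by nlinarith
      have step2 : (1 + h * A) * (ek + vk)
          ≤ (1 + h * A) * (B / A * ((1 + h * A) ^ k - 1) * (h + δ)) :=
        mul_le_mul_of_nonneg_left IH hP0.le
      have eqn : (1 + h * A) * (B / A * ((1 + h * A) ^ k - 1) * (h + δ)) + h * B * (h + δ)
          = B / A * ((1 + h * A) ^ (k+1) - 1) * (h + δ) := by
        field_simp
        ring
      linarith
  -- conclude
  have hfin := key τ le_rfl
  rw [httτ] at hfin
  have hpow : (1 + h * A) ^ τ ≤ Real.exp (A * (t1 - t0)) := by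
    have h1 : 1 + h * A ≤ Real.exp (h * A) := by
      linarith [Real.add_one_le_exp (h * A)]
    have h2 : (0:ℝ) ≤ 1 + h * A := by nlinarith
    calc (1 + h * A) ^ τ ≤ (Real.exp (h * A)) ^ τ := pow_le_pow_left₀ h2 h1 τ
      _ = Real.exp ((h * A) * τ) := by rw [← Real.exp_nat_mul]; ring_nf
      _ = Real.exp (A * (t1 - t0)) := by
          congr 1
          rw [hhdef]
          field_simp
  have hnorm : ‖qd τ - q t1‖ ≤ B / A * ((1 + h * A) ^ τ - 1) * (h + δ) :=
    le_trans (le_add_of_nonneg_right (norm_nonneg _)) hfin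
  have hBA : 0 ≤ B / A := div_nonneg hB0 hA0.le
  have hhδ : 0 ≤ h + δ := by linarith
  calc ‖qd τ - q t1‖ ≤ B / A * ((1 + h * A) ^ τ - 1) * (h + δ) := hnorm
    _ ≤ B / A * Real.exp (A * (t1 - t0)) * (h + δ) := by
        gcongr
        linarith [Real.exp_pos (A * (t1 - t0))]
    _ = B / A * Real.exp (A * (t1 - t0)) * (h + δ) := rfl
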